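/- arXiv:2002.09614 — 2 statements merged into one kernel-verified Lean document; each statement's English description precedes it below -/
import Mathlib

section
/- Let K₀ ⊆ H(M_A,M_B), K₁ ⊆ H(M_B,M_C) and K₂ ⊆ H(M_A,M_C) be subsets of Hermitian-preserving maps. Then the following six conditions are equivalent: (1) K₁∘K₀ ⊆ K₂°; (2) K₁*∘K₂ ⊆ K₀°; (3) K₂∘K₀* ⊆ K₁°; (4) K₁ ⊆ (K₂∘K₀*)°; (5) K₀ ⊆ (K₁*∘K₂)°; (6) K₂ ⊆ (K₁∘K₀)°. -/
open Matrix Finset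
open scoped ComplexOrder Kronecker

/-- The algebra of `n × n` complex matrices. -/
abbrev Mat (n : ℕ) := Matrix (Fin n) (Fin n) ℂ

/-- Linear maps between matrix algebras. -/
abbrev MMap (m n : ℕ) := Mat m →ₗ[ℂ] Mat n

/-- The bilinear pairing `⟨a,b⟩ = Tr(aᵀ b)`. -/
noncomputable def mpair {ι : Type*} [Fintype ι] (x y : Matrix ι ι ℂ) : ℂ :=
  (xᵀ * y).trace

/-- The Choi matrix `C_φ = Σ_{i,j} e_{ij} ⊗ φ(e_{ij})`. -/
noncomputable def choi {m n : ℕ} (φ : MMap m n) :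
    Matrix (Fin m × Fin n) (Fin m × Fin n) ℂ :=
  Matrix.of fun p q => φ (Matrix.single p.1 q.1 1) p.2 q.2

/-- The pairing on maps `⟨φ,ψ⟩ = ⟨C_φ, C_ψ⟩`. -/
noncomputable def mapPair {m n : ℕ} (φ ψ : MMap m n) : ℂ := mpair (choi φ) (choi ψ)

/-- The adjoint `φ*` with respect to the pairing `⟨a,b⟩ = Tr(aᵀ b)`:
it satisfies `⟨φ(a),b⟩ = ⟨a,φ*(b)⟩`. -/
noncomputable def adjMap {m n : ℕ} (φ : MMap m n) : MMap n m where
  toFun y := Matrix.of fun i j => mpair (φ (Matrix.single i j 1)) y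
  map_add' y z := by
    ext i j
    simp [mpair, Matrix.mul_add]
  map_smul' c y := by
    ext i j
    simp [mpair, Matrix.mul_smul]

/-- Hermitian-preserving maps: `φ(a*) = φ(a)*`. -/
def IsHermP {m n : ℕ} (φ : MMap m n) : Prop := ∀ x : Mat m, φ xᴴ = (φ x)ᴴ

/-- The real vector space `H(M_A,M_B)` of Hermitian-preserving maps, as a set. -/
def HermSet (m n : ℕ) : Set (MMap m n) := {φ | IsHermP φ}

/-- Positive maps: mapping positive semidefinite matrices to positive semidefinite ones. -/
def IsPosMap {m n : ℕ} (φ : MMap m n) : Prop :=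
  ∀ x : Mat m, x.PosSemidef → (φ x).PosSemidef

/-- Completely positive maps: those whose Choi matrix is positive semidefinite. -/
def IsCP {m n : ℕ} (φ : MMap m n) : Prop := (choi φ).PosSemidef

/-- The cone `CP` of completely positive maps. -/
def CPset (m n : ℕ) : Set (MMap m n) := {φ | IsCP φ}

/-- `K₁ ∘ K₀ = {φ₁ ∘ φ₀ : φ₁ ∈ K₁, φ₀ ∈ K₀}`. -/
def compSet {m n p : ℕ} (K1 : Set (MMap n p)) (K0 : Set (MMap m n)) : Set (MMap m p) :=
  {χ | ∃ φ₁ ∈ K1, ∃ φ₀ ∈ K0, χ = φ₁ ∘ₗ φ₀}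

/-- `K₂ ∘ K₁ ∘ K₀ = {φ₂ ∘ φ₁ ∘ φ₀ : φᵢ ∈ Kᵢ}`. -/
def comp3 {m n p q : ℕ} (K2 : Set (MMap p q)) (K1 : Set (MMap n p)) (K0 : Set (MMap m n)) :
    Set (MMap m q) :=
  {χ | ∃ φ₂ ∈ K2, ∃ φ₁ ∈ K1, ∃ φ₀ ∈ K0, χ = φ₂ ∘ₗ φ₁ ∘ₗ φ₀}

/-- The dual cone `K° = {ψ ∈ H(M_A,M_B) : ⟨φ,ψ⟩ ≥ 0 for all φ ∈ K}`. -/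
def dualCone {m n : ℕ} (K : Set (MMap m n)) : Set (MMap m n) :=
  {ψ | IsHermP ψ ∧ ∀ φ ∈ K, 0 ≤ mapPair φ ψ}

/-- `K* = {φ* : φ ∈ K}`. -/
noncomputable def starSet {m n : ℕ} (K : Set (MMap m n)) : Set (MMap n m) := adjMap '' K

/-- `K^⊳ = (K ∘ CP_A)°`. -/
def rdualSet {m n : ℕ} (K : Set (MMap m n)) : Set (MMap m n) :=
  dualCone (compSet K (CPset m m))

/-- `K^⊲ = (CP_B ∘ K)°`. -/
def ldualSet {m n : ℕ} (K : Set (MMap m n)) : Set (MMap m n) :=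
  dualCone (compSet (CPset n n) K)

/-- A convex cone of maps: closed under addition and nonnegative real scaling. -/
def IsConeSet {m n : ℕ} (K : Set (MMap m n)) : Prop :=
  (∀ φ ∈ K, ∀ ψ ∈ K, φ + ψ ∈ K) ∧ (∀ φ ∈ K, ∀ r : ℝ, 0 ≤ r → (r : ℂ) • φ ∈ K)

/-- A closed convex cone of maps (closedness via the Choi isomorphism). -/
def IsClosedConeSet {m n : ℕ} (K : Set (MMap m n)) : Prop :=
  IsConeSet K ∧ IsClosed (choi '' K)

/-- Ampliation `1_Z ⊗ σ : M_Z ⊗ M_X → M_Z ⊗ M_Y`. -/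
def idTensor {z x y : ℕ} (σ : MMap x y)
    (M : Matrix (Fin z × Fin x) (Fin z × Fin x) ℂ) :
    Matrix (Fin z × Fin y) (Fin z × Fin y) ℂ :=
  Matrix.of fun p q => σ (Matrix.of fun k l => M (p.1, k) (q.1, l)) p.2 q.2

/-- Ampliation `σ ⊗ 1_Z : M_X ⊗ M_Z → M_Y ⊗ M_Z`. -/
def tensorId {x y z : ℕ} (σ : MMap x y)
    (M : Matrix (Fin x × Fin z) (Fin x × Fin z) ℂ) :
    Matrix (Fin y × Fin z) (Fin y × Fin z) ℂ :=
  Matrix.of fun p q => σ (Matrix.of fun i j => M (i, p.2) (j, q.2)) p.1 q.1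

/-- `S_1`: the closed convex cone generated by `x ⊗ y` with `x, y` positive semidefinite. -/
def SepCone (m n : ℕ) : Set (Matrix (Fin m × Fin n) (Fin m × Fin n) ℂ) :=
  closure {X | ∃ (r : ℕ) (x : Fin r → Mat m) (y : Fin r → Mat n),
    (∀ i, (x i).PosSemidef ∧ (y i).PosSemidef) ∧ X = ∑ i, x i ⊗ₖ y i}

/-- `SP_1`: Hermitian-preserving maps with separable Choi matrix. -/
def SP1set (m n : ℕ) : Set (MMap m n) := {φ | IsHermP φ ∧ choi φ ∈ SepCone m n}


/-- Vectors of Schmidt rank at most `k`. -/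
def SchmidtRankLE (k : ℕ) {m n : ℕ} (ξ : Fin m × Fin n → ℂ) : Prop :=
  ∃ (u : Fin k → Fin m → ℂ) (v : Fin k → Fin n → ℂ),
    ξ = fun p => ∑ i, u i p.1 * v i p.2

/-- `k`-blockpositive matrices: `⟨Y, |ξ⟩⟨ξ|⟩ ≥ 0` for every `ξ` of Schmidt rank at most `k`. -/
def BlockPos (k : ℕ) {m n : ℕ} (Y : Matrix (Fin m × Fin n) (Fin m × Fin n) ℂ) : Prop :=
  ∀ ξ : Fin m × Fin n → ℂ, SchmidtRankLE k ξ →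
    0 ≤ mpair Y (Matrix.of fun p q => ξ p * star (ξ q))

/-- `S_k`: the closed convex cone generated by `|ξ⟩⟨ξ|` for `ξ` of Schmidt rank at most `k`. -/
def SchmidtCone (k m n : ℕ) : Set (Matrix (Fin m × Fin n) (Fin m × Fin n) ℂ) :=
  closure {X | ∃ (r : ℕ) (ξ : Fin r → Fin m × Fin n → ℂ),
    (∀ i, SchmidtRankLE k (ξ i)) ∧
    X = ∑ i, Matrix.of fun p q => ξ i p * star (ξ i q)}

/-- `k`-positive maps: the ampliation `1_{M_k} ⊗ φ` is a positive map. -/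
def IsKPos (k : ℕ) {m n : ℕ} (φ : MMap m n) : Prop :=
  ∀ X : Matrix (Fin k × Fin m) (Fin k × Fin m) ℂ, X.PosSemidef → (idTensor φ X).PosSemidef

/-- The transpose map as a linear map. -/
def tmap (m : ℕ) : MMap m m where
  toFun x := xᵀ
  map_add' x y := by simp [Matrix.transpose_add]
  map_smul' c x := by simp [Matrix.transpose_smul]

/-- Completely copositive maps: `CCP = {φ ∘ t : φ ∈ CP}`. -/
def CCPset (m : ℕ) : Set (MMap m m) := {χ | ∃ φ, IsCP φ ∧ χ = φ ∘ₗ tmap m}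

/-- PPT maps: `PPT = CP ∩ CCP`. -/
def PPTset (m : ℕ) : Set (MMap m m) := CPset m m ∩ CCPset m

/-- Decomposable maps: the convex hull of `CP` and `CCP`. -/
noncomputable def DECset (m : ℕ) : Set (MMap m m) := convexHull ℝ (CPset m m ∪ CCPset m)

/-- The cone `P_1` of positive maps. -/
def P1set (m n : ℕ) : Set (MMap m n) := {φ | IsPosMap φ}

/-- A right-mapping cone: a closed convex cone of positive (Hermitian-preserving) maps `L`
with `L ∘ CP_A ⊆ L`. -/
def IsRMC {m n : ℕ} (L : Set (MMap m n)) : Prop :=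
  L ⊆ HermSet m n ∧ (∀ φ ∈ L, IsPosMap φ) ∧ IsClosedConeSet L ∧
    compSet L (CPset m m) ⊆ L

/-- A left-mapping cone: a closed convex cone of positive (Hermitian-preserving) maps `L`
with `CP_B ∘ L ⊆ L`. -/
def IsLMC {m n : ℕ} (L : Set (MMap m n)) : Prop :=
  L ⊆ HermSet m n ∧ (∀ φ ∈ L, IsPosMap φ) ∧ IsClosedConeSet L ∧
    compSet (CPset n n) L ⊆ L


-- entrywise form of mpair
lemma mpair_eq {ι : Type*} [Fintype ι] (x y : Matrix ι ι ℂ) :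
    mpair x y = ∑ i, ∑ j, x i j * y i j := by
  simp only [mpair, Matrix.trace, Matrix.mul_apply, Matrix.diag, Matrix.transpose_apply]
  rw [Finset.sum_comm]

lemma mpair_comm {ι : Type*} [Fintype ι] (x y : Matrix ι ι ℂ) :
    mpair x y = mpair y x := by
  simp only [mpair_eq, mul_comm]

lemma stdBasis_smul {m : ℕ} (i j : Fin m) (c : ℂ) :
    Matrix.single i j c = c • Matrix.single i j (1:ℂ) := by
  rw [Matrix.smul_single, smul_eq_mul, mul_one]

lemma apply_expand {m n : ℕ} (φ : MMap m n) (x : Mat m) (k l : Fin n) :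
    φ x k l = ∑ i, ∑ j, x i j * φ (Matrix.single i j 1) k l := by
  conv_lhs => rw [Matrix.matrix_eq_sum_single x]
  rw [map_sum]
  simp only [map_sum, Matrix.sum_apply]
  refine Finset.sum_congr rfl fun i _ => ?_
  refine Finset.sum_congr rfl fun j _ => ?_
  rw [stdBasis_smul, LinearMap.map_smul, Matrix.smul_apply, smul_eq_mul]

lemma adj_apply {m n : ℕ} (φ : MMap m n) (y : Mat n) (i j : Fin m) :
    adjMap φ y i j = mpair (φ (Matrix.single i j 1)) y := rfl

lemma adj_apply_basis {m n : ℕ} (φ : MMap m n) (k l : Fin n) (i j : Fin m) :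
    adjMap φ (Matrix.single k l 1) i j = φ (Matrix.single i j 1) k l := by
  rw [adj_apply, mpair_eq]
  simp [Matrix.single, Matrix.of_apply, mul_ite, ite_and, Finset.sum_ite_eq]

lemma mpair_sum_left {ι α : Type*} [Fintype ι] (s : Finset α) (f : α → Matrix ι ι ℂ)
    (y : Matrix ι ι ℂ) : mpair (∑ i ∈ s, f i) y = ∑ i ∈ s, mpair (f i) y := by
  simp [mpair, Matrix.transpose_sum, Matrix.sum_mul, Matrix.trace_sum]

lemma mpair_smul_left {ι : Type*} [Fintype ι] (c : ℂ) (x y : Matrix ι ι ℂ) :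
    mpair (c • x) y = c * mpair x y := by
  simp [mpair, Matrix.transpose_smul, Matrix.smul_mul, Matrix.trace_smul]

lemma mpair_adj {m n : ℕ} (φ : MMap m n) (x : Mat m) (y : Mat n) :
    mpair (φ x) y = mpair x (adjMap φ y) := by
  conv_lhs => rw [Matrix.matrix_eq_sum_single x]
  rw [map_sum, mpair_sum_left]
  conv_rhs => rw [mpair_eq]
  refine Finset.sum_congr rfl fun i _ => ?_
  rw [map_sum, mpair_sum_left]
  refine Finset.sum_congr rfl fun j _ => ?_
  rw [stdBasis_smul, LinearMap.map_smul, mpair_smul_left, adj_apply]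

lemma mapPair_eq {m n : ℕ} (φ ψ : MMap m n) :
    mapPair φ ψ = ∑ i, ∑ j, mpair (φ (Matrix.single i j 1)) (ψ (Matrix.single i j 1)) := by
  simp only [mapPair, mpair_eq, choi, Matrix.of_apply, Fintype.sum_prod_type]
  refine Finset.sum_congr rfl fun i _ => ?_
  rw [Finset.sum_comm]

lemma mapPair_comm {m n : ℕ} (φ ψ : MMap m n) : mapPair φ ψ = mapPair ψ φ := by
  rw [mapPair, mapPair, mpair_comm]

lemma adjMap_comp {m n p : ℕ} (φ : MMap n p) (ψ : MMap m n) :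
    adjMap (φ ∘ₗ ψ) = adjMap ψ ∘ₗ adjMap φ := by
  apply LinearMap.ext
  intro y
  ext i j
  rw [LinearMap.comp_apply, adj_apply, LinearMap.comp_apply, mpair_adj, adj_apply]

lemma adj_adj {m n : ℕ} (φ : MMap m n) : adjMap (adjMap φ) = φ := by
  apply LinearMap.ext
  intro x
  ext i j
  rw [adj_apply, mpair_eq, apply_expand φ x i j]
  refine Finset.sum_congr rfl fun k _ => ?_
  refine Finset.sum_congr rfl fun l _ => ?_
  rw [adj_apply_basis, mul_comm]

lemma mapPair_eq' {m n : ℕ} (φ ψ : MMap m n) :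
    mapPair φ ψ = ∑ i, ∑ j, ∑ k, ∑ l,
      φ (Matrix.single i j 1) k l * ψ (Matrix.single i j 1) k l := by
  simp only [mapPair_eq, mpair_eq]

lemma sum_swap3 {α β γ : Type*} [Fintype α] [Fintype β] [Fintype γ]
    (g : α → β → γ → ℂ) :
    ∑ a, ∑ b, ∑ c, g a b c = ∑ c, ∑ a, ∑ b, g a b c := by
  have h : ∑ a, ∑ b, ∑ c, g a b c = ∑ a, ∑ c, ∑ b, g a b c :=
    Finset.sum_congr rfl fun a _ => Finset.sum_comm
  rw [h, Finset.sum_comm]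

lemma sum_swap4 {α β γ δ : Type*} [Fintype α] [Fintype β] [Fintype γ] [Fintype δ]
    (f : α → β → γ → δ → ℂ) :
    ∑ a, ∑ b, ∑ c, ∑ d, f a b c d = ∑ c, ∑ d, ∑ a, ∑ b, f a b c d := by
  rw [sum_swap3 (fun a b c => ∑ d, f a b c d)]
  exact Finset.sum_congr rfl fun c _ => sum_swap3 (fun a b d => f a b c d)

lemma mapPair_adj_adj {m n : ℕ} (φ ψ : MMap m n) :
    mapPair (adjMap φ) (adjMap ψ) = mapPair φ ψ := by
  simp only [mapPair_eq', adj_apply_basis]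
  rw [sum_swap4]

lemma key1 {a b c : ℕ} (φ₀ : MMap a b) (φ₁ : MMap b c) (φ₂ : MMap a c) :
    mapPair (φ₁ ∘ₗ φ₀) φ₂ = mapPair φ₀ (adjMap φ₁ ∘ₗ φ₂) := by
  simp only [mapPair_eq, LinearMap.comp_apply]
  refine Finset.sum_congr rfl fun i _ => ?_
  refine Finset.sum_congr rfl fun j _ => ?_
  rw [mpair_adj]

lemma key2 {a b c : ℕ} (φ₀ : MMap a b) (φ₁ : MMap b c) (φ₂ : MMap a c) :
    mapPair (φ₁ ∘ₗ φ₀) φ₂ = mapPair φ₁ (φ₂ ∘ₗ adjMap φ₀) := by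
  conv_rhs => rw [← mapPair_adj_adj, adjMap_comp, adj_adj, mapPair_comm, key1,
    ← adjMap_comp, mapPair_adj_adj, mapPair_comm]

lemma stdBasis_conjT {m : ℕ} (i j : Fin m) :
    (Matrix.single i j (1:ℂ))ᴴ = Matrix.single j i 1 := by
  ext k l
  simp [Matrix.single, Matrix.conjTranspose_apply, and_comm]

lemma hermP_comp {a b c : ℕ} {φ₁ : MMap b c} {φ₀ : MMap a b}
    (h1 : IsHermP φ₁) (h0 : IsHermP φ₀) : IsHermP (φ₁ ∘ₗ φ₀) := by
  intro x
  simp [LinearMap.comp_apply, h0 x, h1 (φ₀ x)]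

lemma hermP_adj {m n : ℕ} {φ : MMap m n} (hφ : IsHermP φ) : IsHermP (adjMap φ) := by
  intro y
  ext i j
  rw [Matrix.conjTranspose_apply, adj_apply, adj_apply, mpair_eq, mpair_eq]
  have hE : φ (Matrix.single j i 1) = (φ (Matrix.single i j 1))ᴴ := by
    rw [← stdBasis_conjT, hφ]
  rw [Finset.sum_comm]
  simp only [star_sum, star_mul', hE, Matrix.conjTranspose_apply, star_star]

/-- six equivalent inclusions relating compositions and dual cones. -/
theorem stmt1 {a b c : ℕ} (K0 : Set (MMap a b)) (K1 : Set (MMap b c)) (K2 : Set (MMap a c))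
    (hK0 : K0 ⊆ HermSet a b) (hK1 : K1 ⊆ HermSet b c) (hK2 : K2 ⊆ HermSet a c) :
    [compSet K1 K0 ⊆ dualCone K2,
     compSet (starSet K1) K2 ⊆ dualCone K0,
     compSet K2 (starSet K0) ⊆ dualCone K1,
     K1 ⊆ dualCone (compSet K2 (starSet K0)),
     K0 ⊆ dualCone (compSet (starSet K1) K2),
     K2 ⊆ dualCone (compSet K1 K0)].TFAE := by
  set P : Prop := ∀ φ₁ ∈ K1, ∀ φ₀ ∈ K0, ∀ φ₂ ∈ K2, 0 ≤ mapPair (φ₁ ∘ₗ φ₀) φ₂ with hP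
  have e1 : (compSet K1 K0 ⊆ dualCone K2) ↔ P := by
    constructor
    · intro h φ₁ h1 φ₀ h0 φ₂ h2
      have := (h ⟨φ₁, h1, φ₀, h0, rfl⟩).2 φ₂ h2
      rwa [mapPair_comm] at this
    · rintro h χ ⟨φ₁, h1, φ₀, h0, rfl⟩
      exact ⟨hermP_comp (hK1 h1) (hK0 h0),
        fun φ₂ h2 => by rw [mapPair_comm]; exact h φ₁ h1 φ₀ h0 φ₂ h2⟩
  have e2 : (compSet (starSet K1) K2 ⊆ dualCone K0) ↔ P := by
    constructor
    · intro h φ₁ h1 φ₀ h0 φ₂ h2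
      have := (h ⟨adjMap φ₁, ⟨φ₁, h1, rfl⟩, φ₂, h2, rfl⟩).2 φ₀ h0
      rwa [← key1] at this
    · rintro h χ ⟨ψ, ⟨φ₁, h1, rfl⟩, φ₂, h2, rfl⟩
      refine ⟨hermP_comp (hermP_adj (hK1 h1)) (hK2 h2), fun φ₀ h0 => ?_⟩
      rw [← key1]
      exact h φ₁ h1 φ₀ h0 φ₂ h2
  have e3 : (compSet K2 (starSet K0) ⊆ dualCone K1) ↔ P := by
    constructor
    · intro h φ₁ h1 φ₀ h0 φ₂ h2
      have := (h ⟨φ₂, h2, adjMap φ₀, ⟨φ₀, h0, rfl⟩, rfl⟩).2 φ₁ h1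
      rwa [← key2] at this
    · rintro h χ ⟨φ₂, h2, ψ, ⟨φ₀, h0, rfl⟩, rfl⟩
      refine ⟨hermP_comp (hK2 h2) (hermP_adj (hK0 h0)), fun φ₁ h1 => ?_⟩
      rw [← key2]
      exact h φ₁ h1 φ₀ h0 φ₂ h2
  have e4 : (K1 ⊆ dualCone (compSet K2 (starSet K0))) ↔ P := by
    constructor
    · intro h φ₁ h1 φ₀ h0 φ₂ h2
      have := (h h1).2 (φ₂ ∘ₗ adjMap φ₀) ⟨φ₂, h2, adjMap φ₀, ⟨φ₀, h0, rfl⟩, rfl⟩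
      rwa [mapPair_comm, ← key2] at this
    · intro h φ₁ h1
      refine ⟨hK1 h1, ?_⟩
      rintro χ ⟨φ₂, h2, ψ, ⟨φ₀, h0, rfl⟩, rfl⟩
      rw [mapPair_comm, ← key2]
      exact h φ₁ h1 φ₀ h0 φ₂ h2
  have e5 : (K0 ⊆ dualCone (compSet (starSet K1) K2)) ↔ P := by
    constructor
    · intro h φ₁ h1 φ₀ h0 φ₂ h2
      have := (h h0).2 (adjMap φ₁ ∘ₗ φ₂) ⟨adjMap φ₁, ⟨φ₁, h1, rfl⟩, φ₂, h2, rfl⟩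
      rwa [mapPair_comm, ← key1] at this
    · intro h φ₀ h0
      refine ⟨hK0 h0, ?_⟩
      rintro χ ⟨ψ, ⟨φ₁, h1, rfl⟩, φ₂, h2, rfl⟩
      rw [mapPair_comm, ← key1]
      exact h φ₁ h1 φ₀ h0 φ₂ h2
  have e6 : (K2 ⊆ dualCone (compSet K1 K0)) ↔ P := by
    constructor
    · intro h φ₁ h1 φ₀ h0 φ₂ h2
      exact (h h2).2 (φ₁ ∘ₗ φ₀) ⟨φ₁, h1, φ₀, h0, rfl⟩
    · intro h φ₂ h2
      refine ⟨hK2 h2, ?_⟩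
      rintro χ ⟨φ₁, h1, φ₀, h0, rfl⟩
      exact h φ₁ h1 φ₀ h0 φ₂ h2
  refine List.tfae_of_forall P _ ?_
  intro p hp
  simp only [List.mem_cons, List.not_mem_nil, or_false] at hp
  rcases hp with h|h|h|h|h|h <;> subst h
  exacts [e1, e2, e3, e4, e5, e6]
end

section
/- Let K be a nonzero closed convex cone in H(M_A,M_B) satisfying CP_B∘K∘CP_A ⊆ K, and suppose there exists a map φ ∈ K with Tr(C_φ) > 0. Then SP_1 ⊆ K, i.e., every Hermitian-preserving map whose Choi matrix is separable belongs to K. -/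
open Matrix Finset
open scoped ComplexOrder Kronecker

/-!
For positive semidefinite `x`, `y` the rank-one maps `z ↦ ⟨x, z⟩ y` are completely
positive, with Choi matrix `x ⊗ y`. Sandwiching a map `φ ∈ K` between `z ↦ ⟨x, z⟩ 1` and
`z ↦ ⟨1, z⟩ y` gives `Tr(C_φ) · (z ↦ ⟨x, z⟩ y)`, so all these maps lie in `K` once `Tr(C_φ) > 0`.
Their Choi matrices generate `S_1`, and `K` is closed.
-/

noncomputable def rankOneMap {a b : ℕ} (x : Mat a) (y : Mat b) : MMap a b where
  toFun z := mpair x z • y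
  map_add' z w := by simp [mpair, Matrix.mul_add, add_smul]
  map_smul' c z := by simp [mpair, smul_smul]

lemma rankOneMap_apply {a b : ℕ} (x : Mat a) (y : Mat b) (z : Mat a) :
    rankOneMap x y z = mpair x z • y := rfl

lemma mpair_single_one {m : ℕ} (x : Mat m) (i j : Fin m) :
    mpair x (Matrix.single i j 1) = x i j := by
  simp [mpair, Matrix.trace, Matrix.mul_apply, Matrix.single, ite_and]

lemma choi_rankOneMap {a b : ℕ} (x : Mat a) (y : Mat b) : choi (rankOneMap x y) = x ⊗ₖ y := by
  ext p q
  simp [choi, rankOneMap_apply, mpair_single_one]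

lemma isCP_rankOneMap {a b : ℕ} {x : Mat a} {y : Mat b} (hx : x.PosSemidef)
    (hy : y.PosSemidef) : IsCP (rankOneMap x y) := by
  rw [IsCP, choi_rankOneMap]
  exact hx.kronecker hy

lemma rankOneMap_comp_comp {a b : ℕ} (φ : MMap a b) (x : Mat a) (y : Mat b) :
    rankOneMap 1 y ∘ₗ φ ∘ₗ rankOneMap x 1 = (φ 1).trace • rankOneMap x y := by
  ext1 z
  simp only [LinearMap.comp_apply, rankOneMap_apply, mpair, LinearMap.map_smul,
    LinearMap.smul_apply, Matrix.transpose_one, Matrix.one_mul, smul_smul, mul_comm]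

lemma choi_sum {a b : ℕ} {ι : Type*} (s : Finset ι) (f : ι → MMap a b) :
    choi (∑ i ∈ s, f i) = ∑ i ∈ s, choi (f i) := by
  ext p q
  simp [choi, LinearMap.sum_apply, Matrix.sum_apply]

lemma choi_injective {a b : ℕ} : Function.Injective (choi (m := a) (n := b)) := by
  intro φ ψ h
  refine Matrix.ext_linearMap ℂ fun i j => LinearMap.ext_ring ?_
  ext k l
  exact congrFun (congrFun h (i, k)) (j, l)

lemma trace_choi {a b : ℕ} (φ : MMap a b) : (choi φ).trace = (φ 1).trace := by
  rw [← Matrix.sum_single_one, map_sum]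
  simp only [Matrix.trace, Matrix.diag, choi, Matrix.of_apply, Matrix.sum_apply,
    Fintype.sum_prod_type]
  exact Finset.sum_comm

namespace IsConeSet

variable {a b : ℕ} {K : Set (MMap a b)}

lemma zero_mem (hK : IsConeSet K) {φ : MMap a b} (hφ : φ ∈ K) : (0 : MMap a b) ∈ K := by
  simpa using hK.2 φ hφ 0 le_rfl

lemma sum_mem (hK : IsConeSet K) (h0 : (0 : MMap a b) ∈ K) {ι : Type*} (s : Finset ι)
    {f : ι → MMap a b} (hf : ∀ i ∈ s, f i ∈ K) : ∑ i ∈ s, f i ∈ K :=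
  Finset.sum_induction f (· ∈ K) (fun φ ψ hφ hψ => hK.1 φ hφ ψ hψ) h0 hf

lemma mem_of_smul_mem (hK : IsConeSet K) {t : ℂ} (ht : 0 < t) {φ : MMap a b}
    (h : t • φ ∈ K) : φ ∈ K := by
  obtain ⟨r, rfl⟩ : ∃ r : ℝ, t = r :=
    ⟨t.re, Complex.eq_re_of_ofReal_le (r := 0) (by simpa using ht.le)⟩
  have hr := Complex.zero_lt_real.mp ht
  have := hK.2 _ h r⁻¹ (inv_nonneg.mpr hr.le)
  rwa [smul_smul, ← Complex.ofReal_mul, inv_mul_cancel₀ hr.ne', Complex.ofReal_one,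
    one_smul] at this

end IsConeSet

lemma rankOneMap_mem {a b : ℕ} {K : Set (MMap a b)} (hK : IsConeSet K)
    (hmc : comp3 (CPset b b) K (CPset a a) ⊆ K) {φ : MMap a b} (hφK : φ ∈ K)
    (hφ : 0 < (choi φ).trace) {x : Mat a} {y : Mat b} (hx : x.PosSemidef)
    (hy : y.PosSemidef) : rankOneMap x y ∈ K := by
  have hsandwich : rankOneMap 1 y ∘ₗ φ ∘ₗ rankOneMap x 1 ∈ K :=
    hmc ⟨_, isCP_rankOneMap PosSemidef.one hy, φ, hφK, _, isCP_rankOneMap hx PosSemidef.one,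
      rfl⟩
  rw [rankOneMap_comp_comp, ← trace_choi] at hsandwich
  exact hK.mem_of_smul_mem hφ hsandwich

lemma sepCone_subset_choi_image {a b : ℕ} {K : Set (MMap a b)} (hK : IsClosedConeSet K)
    (h0 : (0 : MMap a b) ∈ K)
    (hrank : ∀ (x : Mat a) (y : Mat b), x.PosSemidef → y.PosSemidef → rankOneMap x y ∈ K) :
    SepCone a b ⊆ choi '' K := by
  refine closure_minimal ?_ hK.2
  rintro X ⟨r, x, y, hxy, rfl⟩
  refine ⟨∑ i, rankOneMap (x i) (y i),
    hK.1.sum_mem h0 _ fun i _ => hrank _ _ (hxy i).1 (hxy i).2, ?_⟩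
  rw [choi_sum]
  exact Finset.sum_congr rfl fun i _ => choi_rankOneMap _ _

theorem stmt10_general {a b : ℕ} (K : Set (MMap a b))
    (hK : IsClosedConeSet K)
    (hmc : comp3 (CPset b b) K (CPset a a) ⊆ K)
    (htr : ∃ φ ∈ K, 0 < (choi φ).trace) :
    SP1set a b ⊆ K := by
  obtain ⟨φ, hφK, hφ⟩ := htr
  have hsep := sepCone_subset_choi_image hK (hK.1.zero_mem hφK)
    fun _ _ hx hy => rankOneMap_mem hK.1 hmc hφK hφ hx hy
  rintro ψ ⟨-, hψ⟩
  obtain ⟨χ, hχK, hχψ⟩ := hsep hψ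
  rwa [← choi_injective hχψ]

/-- a nonzero closed convex cone `K` with `CP_B∘K∘CP_A ⊆ K` containing a map
whose Choi matrix has positive trace contains all of `SP_1`. -/
theorem stmt10 {a b : ℕ} (K : Set (MMap a b))
    (hH : K ⊆ HermSet a b) (hK : IsClosedConeSet K) (hne : K ≠ {0})
    (hmc : comp3 (CPset b b) K (CPset a a) ⊆ K)
    (htr : ∃ φ ∈ K, 0 < (choi φ).trace) :
    SP1set a b ⊆ K :=
  stmt10_general K hK hmc htr
end
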